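/- Let Q be a join query over relations R₁,...,Rₙ with attribute set A, and let (e₁,...,eₙ) be a fractional edge cover, i.e., eᵢ ≥ 0 and for every attribute a ∈ A, the sum of eᵢ over relations Rᵢ containing a is at least 1. Then |R₁ ⋈ ... ⋈ Rₙ| ≤ ∏ᵢ |Rᵢ|^{eᵢ}. -/
import Mathlib


open scoped Classical


lemma holder_sum_prod {ι κ : Type*} (s : Finset ι) (W : Finset κ)
    (w : ι → ℝ) (f : ι → κ → ℝ)
    (hw : ∀ i ∈ s, 0 ≤ w i) (hs : 1 ≤ ∑ i ∈ s, w i)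
    (hf : ∀ i ∈ s, ∀ v ∈ W, 0 ≤ f i v) :
    ∑ v ∈ W, ∏ i ∈ s, f i v ^ w i ≤ ∏ i ∈ s, (∑ v ∈ W, f i v) ^ w i := by
  classical
  -- reduce to positive weights
  set s' := s.filter (fun i => 0 < w i) with hs'
  have hsub : s' ⊆ s := Finset.filter_subset _ _
  have hzero : ∀ i ∈ s, i ∉ s' → w i = 0 := by
    intro i hi hi'
    by_contra h
    exact hi' (Finset.mem_filter.2 ⟨hi, lt_of_le_of_ne (hw i hi) (Ne.symm h)⟩)
  have hps : ∀ g : ι → ℝ, ∏ i ∈ s, g i ^ w i = ∏ i ∈ s', g i ^ w i := by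
    intro g
    rw [← Finset.prod_filter_mul_prod_filter_not s (fun i => 0 < w i)]
    have : ∏ i ∈ s.filter (fun i => ¬ 0 < w i), g i ^ w i = 1 := by
      apply Finset.prod_eq_one
      intro i hi
      rcases Finset.mem_filter.1 hi with ⟨hi1, hi2⟩
      have : w i = 0 := le_antisymm (not_lt.1 hi2) (hw i hi1)
      rw [this, Real.rpow_zero]
    rw [this, mul_one]
  have hsum' : 1 ≤ ∑ i ∈ s', w i := by
    calc 1 ≤ ∑ i ∈ s, w i := hs
    _ = ∑ i ∈ s', w i := by
        rw [← Finset.sum_filter_add_sum_filter_not s (fun i => 0 < w i)]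
        have : ∑ i ∈ s.filter (fun i => ¬ 0 < w i), w i = 0 := by
          apply Finset.sum_eq_zero
          intro i hi
          rcases Finset.mem_filter.1 hi with ⟨hi1, hi2⟩
          exact le_antisymm (not_lt.1 hi2) (hw i hi1)
        rw [this, add_zero]
  simp only [hps]
  -- now all weights on s' positive
  have hwpos : ∀ i ∈ s', 0 < w i := fun i hi => (Finset.mem_filter.1 hi).2
  have hf' : ∀ i ∈ s', ∀ v ∈ W, 0 ≤ f i v := fun i hi => hf i (hsub hi)
  set F : ι → ℝ := fun i => ∑ v ∈ W, f i v with hF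
  have hFnn : ∀ i ∈ s', 0 ≤ F i := fun i hi => Finset.sum_nonneg (hf' i hi)
  by_cases hex : ∃ i ∈ s', F i = 0
  · rcases hex with ⟨i, hi, hFi⟩
    have hfz : ∀ v ∈ W, f i v = 0 := by
      intro v hv
      have := (Finset.sum_eq_zero_iff_of_nonneg (hf' i hi)).1 hFi
      exact this v hv
    have : ∑ v ∈ W, ∏ j ∈ s', f j v ^ w j = 0 := by
      apply Finset.sum_eq_zero
      intro v hv
      apply Finset.prod_eq_zero hi
      rw [hfz v hv, Real.zero_rpow (ne_of_gt (hwpos i hi))]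
    rw [this]
    exact Finset.prod_nonneg fun j hj => Real.rpow_nonneg (hFnn j hj) _
  · push_neg at hex
    have hFpos : ∀ i ∈ s', 0 < F i := fun i hi =>
      lt_of_le_of_ne (hFnn i hi) (Ne.symm (hex i hi))
    set T := ∑ i ∈ s', w i with hT
    have hTpos : 0 < T := lt_of_lt_of_le one_pos hsum'
    -- pointwise bound
    have key : ∀ v ∈ W, ∏ i ∈ s', f i v ^ w i ≤
        (∏ i ∈ s', F i ^ w i) * ∏ i ∈ s', (f i v / F i) ^ (w i / T) := by
      intro v hv
      rw [← Finset.prod_mul_distrib]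
      apply Finset.prod_le_prod
      · intro i hi; exact Real.rpow_nonneg (hf' i hi v hv) _
      · intro i hi
        have h1 : f i v ^ w i = F i ^ w i * (f i v / F i) ^ w i := by
          rw [Real.div_rpow (hf' i hi v hv) (hFnn i hi)]
          rw [mul_comm (F i ^ w i),
            div_mul_cancel₀ _ (ne_of_gt (Real.rpow_pos_of_pos (hFpos i hi) _))]
        rw [h1]
        apply mul_le_mul_of_nonneg_left _ (Real.rpow_nonneg (hFnn i hi) _)
        rcases eq_or_lt_of_le (hf' i hi v hv) with h0 | h0
        · rw [← h0]
          rw [zero_div, Real.zero_rpow (ne_of_gt (hwpos i hi)),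
            Real.zero_rpow (ne_of_gt (div_pos (hwpos i hi) hTpos))]
        · apply Real.rpow_le_rpow_of_exponent_ge (div_pos h0 (hFpos i hi))
          · rw [div_le_one (hFpos i hi)]
            exact Finset.single_le_sum (hf' i hi) hv
          · exact div_le_self (le_of_lt (hwpos i hi)) hsum'
    calc ∑ v ∈ W, ∏ i ∈ s', f i v ^ w i
        ≤ ∑ v ∈ W, (∏ i ∈ s', F i ^ w i) * ∏ i ∈ s', (f i v / F i) ^ (w i / T) :=
          Finset.sum_le_sum key
      _ = (∏ i ∈ s', F i ^ w i) * ∑ v ∈ W, ∏ i ∈ s', (f i v / F i) ^ (w i / T) := by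
          rw [← Finset.mul_sum]
      _ ≤ (∏ i ∈ s', F i ^ w i) * 1 := by
          apply mul_le_mul_of_nonneg_left _
            (Finset.prod_nonneg fun i hi => Real.rpow_nonneg (hFnn i hi) _)
          have hsum1 : ∑ i ∈ s', w i / T = 1 := by
            rw [← Finset.sum_div, ← hT, div_self (ne_of_gt hTpos)]
          calc ∑ v ∈ W, ∏ i ∈ s', (f i v / F i) ^ (w i / T)
              ≤ ∑ v ∈ W, ∑ i ∈ s', (w i / T) * (f i v / F i) := by
                apply Finset.sum_le_sum
                intro v hv
                exact Real.geom_mean_le_arith_mean_weighted s' _ _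
                  (fun i hi => le_of_lt (div_pos (hwpos i hi) hTpos)) hsum1
                  (fun i hi => div_nonneg (hf' i hi v hv) (hFnn i hi))
            _ = ∑ i ∈ s', (w i / T) * (F i / F i) := by
                rw [Finset.sum_comm]
                apply Finset.sum_congr rfl
                intro i hi
                rw [← Finset.mul_sum, ← Finset.sum_div]
            _ = 1 := by
                rw [← hsum1]
                apply Finset.sum_congr rfl
                intro i hi
                rw [div_self (ne_of_gt (hFpos i hi)), mul_one]
      _ = ∏ i ∈ s', F i ^ w i := mul_one _


lemma agm_core {A V : Type*} {n : ℕ} (S : Fin n → Set A) (e : Fin n → ℝ)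
    (he : ∀ i, 0 ≤ e i)
    (hcover : ∀ a : A, 1 ≤ ∑ i, if a ∈ S i then e i else 0)
    (B : Finset A) :
    ∀ (J : Finset (A → V)) (P : Fin n → Finset (A → V)),
      (∀ t ∈ J, ∀ t' ∈ J, (∀ a ∈ B, t a = t' a) → t = t') →
      (∀ i, ∀ t ∈ J, ∃ p ∈ P i, ∀ a, a ∈ S i → a ∈ B → t a = p a) →
      (J.card : ℝ) ≤ ∏ i, ((P i).card : ℝ) ^ e i := by
  classical
  induction B using Finset.induction_on with
  | empty =>
    intro J P hJ hproj
    rcases J.eq_empty_or_nonempty with h | ⟨t₀, ht₀⟩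
    · simp only [h, Finset.card_empty, Nat.cast_zero]
      exact Finset.prod_nonneg fun i _ => Real.rpow_nonneg (Nat.cast_nonneg _) _
    · have : J = {t₀} := by
        apply Finset.eq_singleton_iff_unique_mem.2
        exact ⟨ht₀, fun t ht => hJ t ht t₀ ht₀ (by simp)⟩
      rw [this, Finset.card_singleton, Nat.cast_one]
      calc (1:ℝ) = ∏ _i : Fin n, 1 := by simp
        _ ≤ ∏ i, ((P i).card : ℝ) ^ e i := by
            apply Finset.prod_le_prod (fun i _ => zero_le_one)
            intro i _
            apply Real.one_le_rpow _ (he i)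
            rcases hproj i t₀ ht₀ with ⟨p, hp, _⟩
            exact_mod_cast Finset.card_pos.2 ⟨p, hp⟩
  | @insert a B ha IH =>
    intro J P hJ hproj
    set W := J.image (fun t => t a) with hW
    -- fiber decomposition
    have hcard : J.card = ∑ v ∈ W, (J.filter (fun t => t a = v)).card :=
      Finset.card_eq_sum_card_fiberwise (fun t ht => Finset.mem_image_of_mem _ ht)
    set Pv : V → Fin n → Finset (A → V) := fun v i =>
      if a ∈ S i then (P i).filter (fun p => p a = v) else P i with hPv
    have hfiber : ∀ v ∈ W, ((J.filter (fun t => t a = v)).card : ℝ) ≤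
        ∏ i, ((Pv v i).card : ℝ) ^ e i := by
      intro v hv
      apply IH
      · intro t ht t' ht' hag
        rcases Finset.mem_filter.1 ht with ⟨ht1, ht2⟩
        rcases Finset.mem_filter.1 ht' with ⟨ht1', ht2'⟩
        apply hJ t ht1 t' ht1'
        intro b hb
        rcases Finset.mem_insert.1 hb with rfl | hb
        · rw [ht2, ht2']
        · exact hag b hb
      · intro i t ht
        rcases Finset.mem_filter.1 ht with ⟨ht1, ht2⟩
        rcases hproj i t ht1 with ⟨p, hp, hpag⟩
        refine ⟨p, ?_, fun b hb hb' => hpag b hb (Finset.mem_insert_of_mem hb')⟩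
        by_cases haS : a ∈ S i
        · simp only [hPv, if_pos haS]
          apply Finset.mem_filter.2
          exact ⟨hp, by rw [← hpag a haS (Finset.mem_insert_self a B), ht2]⟩
        · simp only [hPv, if_neg haS]
          exact hp
    -- sum the fiber bounds
    have h1 : (J.card : ℝ) ≤ ∑ v ∈ W, ∏ i, ((Pv v i).card : ℝ) ^ e i := by
      rw [hcard]
      push_cast
      exact Finset.sum_le_sum hfiber
    set sI := Finset.univ.filter (fun i : Fin n => a ∈ S i) with hsI
    have hsplit : ∀ v : V, ∏ i, ((Pv v i).card : ℝ) ^ e i =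
        (∏ i ∈ sI, (((P i).filter (fun p => p a = v)).card : ℝ) ^ e i) *
        ∏ i ∈ Finset.univ.filter (fun i : Fin n => ¬ a ∈ S i), ((P i).card : ℝ) ^ e i := by
      intro v
      rw [← Finset.prod_filter_mul_prod_filter_not Finset.univ (fun i : Fin n => a ∈ S i)]
      congr 1
      · apply Finset.prod_congr rfl
        intro i hi
        rw [hPv]
        simp only [if_pos (Finset.mem_filter.1 hi).2]
      · apply Finset.prod_congr rfl
        intro i hi
        rw [hPv]
        simp only [if_neg (Finset.mem_filter.1 hi).2]
    -- Hölder on the covered part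
    have hwsum : 1 ≤ ∑ i ∈ sI, e i := by
      calc 1 ≤ ∑ i, if a ∈ S i then e i else 0 := hcover a
        _ = ∑ i ∈ sI, e i := (Finset.sum_filter _ _).symm
    have hholder : ∑ v ∈ W, ∏ i ∈ sI, (((P i).filter (fun p => p a = v)).card : ℝ) ^ e i ≤
        ∏ i ∈ sI, (∑ v ∈ W, (((P i).filter (fun p => p a = v)).card : ℝ)) ^ e i :=
      holder_sum_prod sI W e _ (fun i _ => he i) hwsum
        (fun i _ v _ => Nat.cast_nonneg _)
    have hfibsum : ∀ i : Fin n, ∑ v ∈ W, (((P i).filter (fun p => p a = v)).card : ℝ) ≤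
        ((P i).card : ℝ) := by
      intro i
      have h2 : ((P i).filter (fun p => p a ∈ W)).card =
          ∑ v ∈ W, (((P i).filter (fun p => p a ∈ W)).filter (fun p => p a = v)).card :=
        Finset.card_eq_sum_card_fiberwise (fun p hp => (Finset.mem_filter.1 hp).2)
      have h3 : ∀ v ∈ W, ((P i).filter (fun p => p a ∈ W)).filter (fun p => p a = v) =
          (P i).filter (fun p => p a = v) := by
        intro v hv
        rw [Finset.filter_filter]
        apply Finset.filter_congr
        intro p _
        constructor
        · exact fun h => h.2
        · exact fun h => ⟨h ▸ hv, h⟩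
      calc ∑ v ∈ W, (((P i).filter (fun p => p a = v)).card : ℝ)
          = (((P i).filter (fun p => p a ∈ W)).card : ℝ) := by
            rw [h2]
            push_cast
            exact (Finset.sum_congr rfl fun v hv => by rw [h3 v hv]).symm
        _ ≤ ((P i).card : ℝ) := by
            exact_mod_cast Finset.card_le_card (Finset.filter_subset _ _)
    calc (J.card : ℝ) ≤ ∑ v ∈ W, ∏ i, ((Pv v i).card : ℝ) ^ e i := h1
      _ = (∑ v ∈ W, ∏ i ∈ sI, (((P i).filter (fun p => p a = v)).card : ℝ) ^ e i) *
          ∏ i ∈ Finset.univ.filter (fun i : Fin n => ¬ a ∈ S i), ((P i).card : ℝ) ^ e i := by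
          rw [Finset.sum_mul]
          exact Finset.sum_congr rfl fun v _ => hsplit v
      _ ≤ (∏ i ∈ sI, ((P i).card : ℝ) ^ e i) *
          ∏ i ∈ Finset.univ.filter (fun i : Fin n => ¬ a ∈ S i), ((P i).card : ℝ) ^ e i := by
          apply mul_le_mul_of_nonneg_right _
            (Finset.prod_nonneg fun i _ => Real.rpow_nonneg (Nat.cast_nonneg _) _)
          calc ∑ v ∈ W, ∏ i ∈ sI, (((P i).filter (fun p => p a = v)).card : ℝ) ^ e i
              ≤ ∏ i ∈ sI, (∑ v ∈ W, (((P i).filter (fun p => p a = v)).card : ℝ)) ^ e i :=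
                hholder
            _ ≤ ∏ i ∈ sI, ((P i).card : ℝ) ^ e i := by
                apply Finset.prod_le_prod
                · intro i _
                  exact Real.rpow_nonneg (Finset.sum_nonneg fun v _ => Nat.cast_nonneg _) _
                · intro i _
                  exact Real.rpow_le_rpow
                    (Finset.sum_nonneg fun v _ => Nat.cast_nonneg _) (hfibsum i) (he i)
      _ = ∏ i, ((P i).card : ℝ) ^ e i :=
          Finset.prod_filter_mul_prod_filter_not Finset.univ _ _

/-- The natural join of a family of relations: each relation `R i` is a set of
tuples over its attribute set `S i ⊆ A`; the join is the set of full tuples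
`A → V` whose restriction to each `S i` lies in `R i`. -/
def NatJoin {A V : Type*} {n : ℕ} (S : Fin n → Set A)
    (R : ∀ i, Set (↥(S i) → V)) : Set (A → V) :=
  {t | ∀ i, (fun a : ↥(S i) => t a) ∈ R i}

/-- The AGM bound: if `(e i)` is a fractional edge cover of the query, i.e.
`e i ≥ 0` and every attribute `a` is covered with total weight at least `1` by
the relations containing it, then the size of the join is at most
`∏ i, |R i| ^ (e i)`. -/
theorem agm_bound {A V : Type*} {n : ℕ} (S : Fin n → Set A)
    (R : ∀ i, Set (↥(S i) → V)) (hfin : ∀ i, (R i).Finite)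
    (e : Fin n → ℝ) (he : ∀ i, 0 ≤ e i)
    (hcover : ∀ a : A, 1 ≤ ∑ i, if a ∈ S i then e i else 0) :
    ((NatJoin S R).ncard : ℝ) ≤ ∏ i, ((R i).ncard : ℝ) ^ (e i) := by
  classical
  have hRHS0 : (0:ℝ) ≤ ∏ i, ((R i).ncard : ℝ) ^ (e i) :=
    Finset.prod_nonneg fun i _ => Real.rpow_nonneg (Nat.cast_nonneg _) _
  rcases (NatJoin S R).eq_empty_or_nonempty with hJe | ⟨t₀, ht₀⟩
  · rw [hJe, Set.ncard_empty]
    exact_mod_cast hRHS0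
  -- every attribute is covered by some relation
  have hmem : ∀ a : A, ∃ i, a ∈ S i := by
    intro a
    by_contra h
    push_neg at h
    have h0 : ∑ i, (if a ∈ S i then e i else 0) = 0 :=
      Finset.sum_eq_zero fun i _ => if_neg (h i)
    linarith [hcover a]
  -- the join is finite
  have hJfin : (NatJoin S R).Finite := by
    have hpi : {g : ∀ i, ↥(S i) → V | ∀ i, g i ∈ R i}.Finite := by
      have := Set.Finite.pi (fun i : Fin n => hfin i)
      apply this.subset
      intro g hg
      exact fun i _ => hg i
    apply Set.Finite.of_finite_image
      (f := fun (t : A → V) (i : Fin n) (a : ↥(S i)) => t a)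
    · exact hpi.subset (by rintro _ ⟨t, ht, rfl⟩; exact ht)
    · intro t ht t' ht' hgg
      funext a
      rcases hmem a with ⟨i, hai⟩
      have := congrFun (congrFun hgg i) ⟨a, hai⟩
      exact this
  -- separating witnesses
  have hsep : ∀ (i : Fin n) (f g : ↥(S i) → V), f ∈ R i → g ∈ R i → f ≠ g →
      ∃ a : ↥(S i), f a ≠ g a := by
    intro i f g _ _ hfg
    by_contra h
    push_neg at h
    exact hfg (funext h)
  set wit : ∀ i : Fin n, (↥(S i) → V) → (↥(S i) → V) → Set A := fun i f g =>
    if h : ∃ a : ↥(S i), f a ≠ g a then {(h.choose : ↥(S i)).1} else ∅ with hwit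
  have hwitfin : ∀ i f g, (wit i f g).Finite := by
    intro i f g
    rw [hwit]
    dsimp only
    split
    · exact Set.finite_singleton _
    · exact Set.finite_empty
  set Bset : Set A := ⋃ i, ⋃ f ∈ R i, ⋃ g ∈ R i, wit i f g with hBset
  have hBfin : Bset.Finite := by
    apply Set.finite_iUnion
    intro i
    exact (hfin i).biUnion fun f _ => (hfin i).biUnion fun g _ => hwitfin i f g
  set B : Finset A := hBfin.toFinset with hB
  -- relations extended to full tuples
  set ext : ∀ i : Fin n, (↥(S i) → V) → (A → V) := fun i f a =>
    if h : a ∈ S i then f ⟨a, h⟩ else t₀ a with hext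
  have hextinj : ∀ i : Fin n, Function.Injective (ext i) := by
    intro i f g hfg
    funext a
    have := congrFun hfg a.1
    rw [hext] at this
    simpa [a.2] using this
  set P : Fin n → Finset (A → V) := fun i => (hfin i).toFinset.image (ext i) with hP
  have hPcard : ∀ i, (P i).card = (R i).ncard := by
    intro i
    rw [hP]
    rw [Finset.card_image_of_injective _ (hextinj i)]
    exact (Set.ncard_eq_toFinset_card _ (hfin i)).symm
  -- apply the core lemma
  have hmain := agm_core S e he hcover B hJfin.toFinset P
  have hJcard : (NatJoin S R).ncard = hJfin.toFinset.card :=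
    Set.ncard_eq_toFinset_card _ hJfin
  rw [hJcard]
  have hgoal : (hJfin.toFinset.card : ℝ) ≤ ∏ i, ((P i).card : ℝ) ^ e i := by
    apply hmain
    · -- injectivity on B
      intro t ht t' ht' hag
      rw [Set.Finite.mem_toFinset] at ht ht'
      have hreq : ∀ i : Fin n, (fun a : ↥(S i) => t a) = (fun a : ↥(S i) => t' a) := by
        intro i
        by_contra hne
        rcases hsep i _ _ (ht i) (ht' i) hne with ⟨a, hafg⟩
        -- the chosen witness is in B
        have hex : ∃ a : ↥(S i), t a.1 ≠ t' a.1 := ⟨a, hafg⟩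
        have hwmem : (hex.choose : ↥(S i)).1 ∈ wit i (fun a : ↥(S i) => t a)
            (fun a : ↥(S i) => t' a) := by
          rw [hwit]
          dsimp only
          rw [dif_pos hex]
          exact rfl
        have hwB : (hex.choose : ↥(S i)).1 ∈ B := by
          rw [hB, Set.Finite.mem_toFinset, hBset]
          apply Set.mem_iUnion.2 ⟨i, _⟩
          apply Set.mem_biUnion (ht i)
          exact Set.mem_biUnion (ht' i) hwmem
        exact hex.choose_spec (hag _ hwB)
      funext a
      rcases hmem a with ⟨i, hai⟩
      exact congrFun (hreq i) ⟨a, hai⟩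
    · -- projections
      intro i t ht
      rw [Set.Finite.mem_toFinset] at ht
      refine ⟨ext i (fun a : ↥(S i) => t a), ?_, ?_⟩
      · rw [hP]
        apply Finset.mem_image_of_mem
        rw [Set.Finite.mem_toFinset]
        exact ht i
      · intro a haS _
        rw [hext]
        simp [haS]
  calc (hJfin.toFinset.card : ℝ) ≤ ∏ i, ((P i).card : ℝ) ^ e i := hgoal
    _ = ∏ i, ((R i).ncard : ℝ) ^ e i := by
        apply Finset.prod_congr rfl
        intro i _
        rw [hPcard i]
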